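/- arXiv:1903.06858 — 2 statements merged into one kernel-verified Lean document; each statement's English description precedes it below -/
import Mathlib

section
/- Let H be a complex Hilbert space and T, A bounded linear operators on H. Suppose that for each θ ∈ [0,2π) there exists a sequence {xₙ} of unit vectors such that |⟨Txₙ,xₙ⟩| → w(T) and lim inf Re{e^{-iθ}⟨Txₙ,xₙ⟩·conj(⟨Axₙ,xₙ⟩)} ≥ 0. Then T is numerical-radius orthogonal to A, i.e., w(T+λA) ≥ w(T) for all λ ∈ ℂ. -/
open scoped InnerProductSpace

/-- Numerical radius of a bounded linear operator on a complex inner product space. -/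
noncomputable def numRadius {E : Type*} [NormedAddCommGroup E] [InnerProductSpace ℂ E]
    (T : E →L[ℂ] E) : ℝ :=
  sSup {r : ℝ | ∃ x : E, ‖x‖ = 1 ∧ r = ‖⟪T x, x⟫_ℂ‖}

/-- Numerical-radius orthogonality: `T ⊥_w A`. -/
def nrOrth {E : Type*} [NormedAddCommGroup E] [InnerProductSpace ℂ E]
    (T A : E →L[ℂ] E) : Prop :=
  ∀ l : ℂ, numRadius T ≤ numRadius (T + l • A)

/-!
Write `λ = r e^{-iθ}` with `θ ∈ [0, 2π)` and take the unit vectors `xₙ` supplied for this `θ`.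
Expanding the square,
`w(T + λA)² ≥ |⟨(T + λA)xₙ, xₙ⟩|² ≥ |⟨Txₙ, xₙ⟩|² + 2r Re(e^{-iθ} ⟨Txₙ, xₙ⟩ conj ⟨Axₙ, xₙ⟩)`,
and passing to the lim inf gives `w(T + λA)² ≥ w(T)²`.
-/

open Filter Topology ComplexConjugate Real

lemma Complex.exists_mem_Ico_eq_norm_mul_exp (l : ℂ) :
    ∃ θ ∈ Set.Ico (0 : ℝ) (2 * π), l = ‖l‖ * Complex.exp (-(θ : ℂ) * Complex.I) := by
  refine ⟨toIcoMod two_pi_pos 0 (-l.arg), toIcoMod_mem_Ico' two_pi_pos _, ?_⟩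
  rw [← self_sub_toIcoDiv_zsmul, zsmul_eq_mul]
  push_cast
  rw [show -(-(l.arg : ℂ) - (toIcoDiv two_pi_pos 0 (-l.arg) : ℂ) * (2 * π)) * Complex.I
      = l.arg * Complex.I + (toIcoDiv two_pi_pos 0 (-l.arg) : ℂ) * (2 * π * Complex.I) by ring,
    Complex.exp_add, Complex.exp_int_mul_two_pi_mul_I, mul_one, Complex.norm_mul_exp_arg_mul_I]

lemma Complex.sq_norm_add_two_mul_re_le (a b : ℂ) :
    ‖a‖ ^ 2 + 2 * (a * conj b).re ≤ ‖a + b‖ ^ 2 := by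
  rw [Complex.sq_norm, Complex.sq_norm, Complex.normSq_add]
  linarith [Complex.normSq_nonneg b]

section NumericalRadius

variable {E : Type*} [NormedAddCommGroup E] [InnerProductSpace ℂ E]

lemma norm_inner_apply_self_le_opNorm (T : E →L[ℂ] E) {x : E} (hx : ‖x‖ = 1) :
    ‖⟪T x, x⟫_ℂ‖ ≤ ‖T‖ :=
  calc ‖⟪T x, x⟫_ℂ‖ ≤ ‖T x‖ * ‖x‖ := norm_inner_le_norm _ _
    _ ≤ ‖T‖ * ‖x‖ * ‖x‖ := by gcongr; exact T.le_opNorm x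
    _ = ‖T‖ := by rw [hx, mul_one, mul_one]

lemma numRadius_bddAbove (T : E →L[ℂ] E) :
    BddAbove {r : ℝ | ∃ x : E, ‖x‖ = 1 ∧ r = ‖⟪T x, x⟫_ℂ‖} := by
  refine ⟨‖T‖, ?_⟩
  rintro r ⟨x, hx, rfl⟩
  exact norm_inner_apply_self_le_opNorm T hx

lemma norm_inner_apply_self_le_numRadius (T : E →L[ℂ] E) {x : E} (hx : ‖x‖ = 1) :
    ‖⟪T x, x⟫_ℂ‖ ≤ numRadius T :=
  le_csSup (numRadius_bddAbove T) ⟨x, hx, rfl⟩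

lemma inner_add_smul_apply_self (T A : E →L[ℂ] E) (l : ℂ) (x : E) :
    ⟪(T + l • A) x, x⟫_ℂ = ⟪T x, x⟫_ℂ + conj l * ⟪A x, x⟫_ℂ := by
  rw [add_apply, smul_apply, inner_add_left, inner_smul_left]

lemma abs_re_mul_inner_mul_conj_inner_le (c : ℂ) (T A : E →L[ℂ] E) {x : E} (hx : ‖x‖ = 1) :
    |(c * ⟪T x, x⟫_ℂ * conj ⟪A x, x⟫_ℂ).re| ≤ ‖c‖ * ‖T‖ * ‖A‖ := by
  refine (Complex.abs_re_le_norm _).trans ?_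
  rw [norm_mul, norm_mul, Complex.norm_conj]
  gcongr
  · exact norm_inner_apply_self_le_opNorm T hx
  · exact norm_inner_apply_self_le_opNorm A hx

lemma sq_norm_inner_add_two_mul_re_le_numRadius_sq (T A : E →L[ℂ] E) (r : ℝ) (c : ℂ) {x : E}
    (hx : ‖x‖ = 1) :
    ‖⟪T x, x⟫_ℂ‖ ^ 2 + 2 * r * (c * ⟪T x, x⟫_ℂ * conj ⟪A x, x⟫_ℂ).re ≤
      numRadius (T + ((r : ℂ) * c) • A) ^ 2 := by
  have hre : (⟪T x, x⟫_ℂ * conj (conj ((r : ℂ) * c) * ⟪A x, x⟫_ℂ)).re =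
      r * (c * ⟪T x, x⟫_ℂ * conj ⟪A x, x⟫_ℂ).re := by
    rw [map_mul, Complex.conj_conj, ← Complex.re_ofReal_mul]
    ring_nf
  calc ‖⟪T x, x⟫_ℂ‖ ^ 2 + 2 * r * (c * ⟪T x, x⟫_ℂ * conj ⟪A x, x⟫_ℂ).re
      ≤ ‖⟪T x, x⟫_ℂ + conj ((r : ℂ) * c) * ⟪A x, x⟫_ℂ‖ ^ 2 := by
        rw [mul_assoc, ← hre]
        exact Complex.sq_norm_add_two_mul_re_le _ _
    _ ≤ numRadius (T + ((r : ℂ) * c) • A) ^ 2 := by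
        rw [← inner_add_smul_apply_self]
        gcongr
        exact norm_inner_apply_self_le_numRadius _ hx

end NumericalRadius

lemma le_of_tendsto_of_liminf_nonneg {u f : ℕ → ℝ} {r w W : ℝ} (hr : 0 < r)
    (hu : Tendsto u atTop (𝓝 w)) (hf_bdd : IsBoundedUnder (· ≥ ·) atTop f)
    (hf : 0 ≤ liminf f atTop) (h : ∀ n, u n + r * f n ≤ W) : w ≤ W := by
  have hlim : Tendsto (fun n => (W - u n) / r) atTop (𝓝 ((W - w) / r)) :=
    (tendsto_const_nhds.sub hu).div_const r
  have hf_le : liminf f atTop ≤ (W - w) / r := by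
    rw [← hlim.liminf_eq]
    refine liminf_le_liminf (Eventually.of_forall fun n => ?_) hf_bdd hlim.isCoboundedUnder_ge
    rw [le_div_iff₀ hr]
    linarith [h n]
  have := (le_div_iff₀ hr).mp (hf.trans hf_le)
  linarith

theorem stmt5_general {H : Type*} [NormedAddCommGroup H] [InnerProductSpace ℂ H]
    (T A : H →L[ℂ] H)
    (h : ∀ θ ∈ Set.Ico (0 : ℝ) (2 * π), ∃ x : ℕ → H, (∀ n, ‖x n‖ = 1) ∧
      Tendsto (fun n => ‖⟪T (x n), x n⟫_ℂ‖) atTop (𝓝 (numRadius T)) ∧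
      0 ≤ atTop.liminf
        (fun n => (Complex.exp (-(θ : ℂ) * Complex.I) * ⟪T (x n), x n⟫_ℂ *
          conj ⟪A (x n), x n⟫_ℂ).re)) :
    nrOrth T A := by
  intro l
  rcases eq_or_ne l 0 with rfl | hl
  · rw [zero_smul, add_zero]
  obtain ⟨θ, hθ, hlθ⟩ := Complex.exists_mem_Ico_eq_norm_mul_exp l
  obtain ⟨x, hx, hxT, hliminf⟩ := h θ hθ
  have hf_bdd : IsBoundedUnder (· ≥ ·) atTop fun n =>
      (Complex.exp (-(θ : ℂ) * Complex.I) * ⟪T (x n), x n⟫_ℂ * conj ⟪A (x n), x n⟫_ℂ).re :=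
    isBoundedUnder_of
      ⟨_, fun n => neg_le_of_abs_le (abs_re_mul_inner_mul_conj_inner_le _ T A (hx n))⟩
  have hW_nonneg : 0 ≤ numRadius (T + l • A) :=
    (norm_nonneg _).trans (norm_inner_apply_self_le_numRadius _ (hx 0))
  have hT_nonneg : 0 ≤ numRadius T := ge_of_tendsto' hxT fun n => norm_nonneg _
  rw [← sq_le_sq₀ hT_nonneg hW_nonneg, hlθ]
  refine le_of_tendsto_of_liminf_nonneg (r := 2 * ‖l‖) (by positivity) (hxT.pow 2) hf_bdd hliminf
    fun n => sq_norm_inner_add_two_mul_re_le_numRadius_sq T A _ _ (hx n)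

theorem stmt5 {H : Type*} [NormedAddCommGroup H] [InnerProductSpace ℂ H] [CompleteSpace H]
    (T A : H →L[ℂ] H)
    (h : ∀ θ ∈ Set.Ico (0 : ℝ) (2 * π), ∃ x : ℕ → H, (∀ n, ‖x n‖ = 1) ∧
      Tendsto (fun n => ‖⟪T (x n), x n⟫_ℂ‖) atTop (𝓝 (numRadius T)) ∧
      0 ≤ atTop.liminf
        (fun n => (Complex.exp (-(θ : ℂ) * Complex.I) * ⟪T (x n), x n⟫_ℂ *
          conj ⟪A (x n), x n⟫_ℂ).re)) :
    nrOrth T A :=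
  stmt5_general T A h
end

section
/- Let H₁,...,Hₙ be complex Hilbert spaces and A = (A_{jk}) an upper triangular n×n operator matrix on H = ⊕Hᵢ (A_{jk} = 0 for j > k). Then w(A) ≥ max{w(A_{kk}), ‖A_{ij}‖/2 : 1 ≤ k ≤ n, 1 ≤ i < j ≤ n}, where ‖·‖ is the operator norm. -/
/-!
Compressing `S` to the `k`-th summand, an isometric copy of `H k`, gives `w(A_kk) ≤ w(S)`.
For `i < j` the quadratic form of `S` at the vector with entries `y` in slot `i` and `x` in
slot `j` is `⟪A_ii y, y⟫ + ⟪A_ij x, y⟫ + ⟪A_jj x, x⟫`, since the block `A_ji` vanishes. Its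
values at `(y, x)` and `(-y, x)` therefore differ by `2⟪A_ij x, y⟫`, which bounds
`‖⟪A_ij x, y⟫‖` by `w(S) (‖x‖² + ‖y‖²)`; testing against `y` parallel to `A_ij x` with
`‖y‖ = ‖x‖` yields `‖A_ij‖ ≤ 2 w(S)`.
-/

open scoped InnerProductSpace

section NumericalRadius

variable {E F : Type*} [NormedAddCommGroup E] [InnerProductSpace ℂ E]
  [NormedAddCommGroup F] [InnerProductSpace ℂ F]

lemma numRadius_nonneg (T : E →L[ℂ] E) : 0 ≤ numRadius T :=
  Real.sSup_nonneg (by rintro r ⟨x, -, rfl⟩; positivity)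

lemma norm_inner_self_le_numRadius (T : E →L[ℂ] E) {z : E} (hz : ‖z‖ = 1) :
    ‖⟪T z, z⟫_ℂ‖ ≤ numRadius T := by
  refine le_csSup ⟨‖T‖, ?_⟩ ⟨z, hz, rfl⟩
  rintro r ⟨x, hx, rfl⟩
  simpa [hx] using (norm_inner_le_norm (T x) x).trans
    (mul_le_mul_of_nonneg_right (T.le_opNorm x) (norm_nonneg x))

lemma norm_inner_self_le_numRadius_mul_sq (T : E →L[ℂ] E) (z : E) :
    ‖⟪T z, z⟫_ℂ‖ ≤ numRadius T * ‖z‖ ^ 2 := by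
  rcases eq_or_ne z 0 with rfl | hz
  · simp
  have hz' : 0 < ‖z‖ := norm_pos_iff.mpr hz
  set u : E := ((‖z‖⁻¹ : ℝ) : ℂ) • z
  have hu : ‖u‖ = 1 := by simp [u, norm_smul, hz'.ne']
  have hTu : ‖⟪T u, u⟫_ℂ‖ = ‖z‖⁻¹ ^ 2 * ‖⟪T z, z⟫_ℂ‖ := by
    simp [u, pow_two, mul_assoc]
  have hbound := norm_inner_self_le_numRadius T hu
  rwa [hTu, inv_pow, inv_mul_le_iff₀ (by positivity), mul_comm] at hbound

lemma numRadius_le_of_isometry (T : F →L[ℂ] F) (S : E →L[ℂ] E) (V : F → E)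
    (hV : ∀ x, ‖V x‖ = ‖x‖) (hTS : ∀ x, ⟪T x, x⟫_ℂ = ⟪S (V x), V x⟫_ℂ) :
    numRadius T ≤ numRadius S := by
  refine Real.sSup_le ?_ (numRadius_nonneg S)
  rintro r ⟨x, hx, rfl⟩
  rw [hTS]
  exact norm_inner_self_le_numRadius S (by rw [hV, hx])

end NumericalRadius

lemma ContinuousLinearMap.opNorm_le_of_norm_inner_le {𝕜 E F : Type*} [RCLike 𝕜]
    [NormedAddCommGroup E] [InnerProductSpace 𝕜 E] [NormedAddCommGroup F] [NormedSpace 𝕜 F]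
    (B : F →L[𝕜] E) {c : ℝ} (hc : 0 ≤ c)
    (h : ∀ x y, ‖⟪B x, y⟫_𝕜‖ ≤ c * (‖x‖ ^ 2 + ‖y‖ ^ 2)) : ‖B‖ ≤ 2 * c := by
  refine B.opNorm_le_bound (by positivity) fun x => ?_
  rcases eq_or_ne (B x) 0 with hBx | hBx
  · rw [hBx, norm_zero]; positivity
  have hBx' : 0 < ‖B x‖ := norm_pos_iff.mpr hBx
  -- test against `y = s • B x` with `s = ‖x‖ / ‖B x‖`, which balances `‖y‖ = ‖x‖`
  set s : ℝ := ‖x‖ / ‖B x‖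
  have hs : 0 ≤ s := by positivity
  have hsB : s * ‖B x‖ = ‖x‖ := div_mul_cancel₀ _ hBx'.ne'
  have key := h x ((s : 𝕜) • B x)
  rw [inner_smul_right, inner_self_eq_norm_sq_to_K, norm_smul, norm_mul, RCLike.norm_ofReal,
    abs_of_nonneg hs, norm_pow, RCLike.norm_ofReal, abs_norm, hsB] at key
  have hx : 0 < ‖x‖ := norm_pos_iff.mpr fun hx => hBx (by simp [hx])
  refine le_of_mul_le_mul_left ?_ hx
  nlinarith

lemma norm_le_two_mul_numRadius {E F G : Type*} [NormedAddCommGroup E] [InnerProductSpace ℂ E]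
    [NormedAddCommGroup F] [InnerProductSpace ℂ F] [NormedAddCommGroup G] [InnerProductSpace ℂ G]
    (S : G →L[ℂ] G) (B : F →L[ℂ] E) (V : E → F → G)
    (hV : ∀ y x, ‖V y x‖ ^ 2 = ‖y‖ ^ 2 + ‖x‖ ^ 2)
    (hSB : ∀ y x, ⟪S (V y x), V y x⟫_ℂ - ⟪S (V (-y) x), V (-y) x⟫_ℂ = 2 * ⟪B x, y⟫_ℂ) :
    ‖B‖ ≤ 2 * numRadius S := by
  refine B.opNorm_le_of_norm_inner_le (numRadius_nonneg S) fun x y => ?_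
  have h := (norm_sub_le _ _).trans (add_le_add
    (norm_inner_self_le_numRadius_mul_sq S (V y x))
    (norm_inner_self_le_numRadius_mul_sq S (V (-y) x)))
  rw [hSB, hV, hV, norm_neg, norm_mul, Complex.norm_ofNat] at h
  linarith

section BlockMatrix

variable {ι : Type*} [Fintype ι] [DecidableEq ι] {H : ι → Type*}
  [∀ i, NormedAddCommGroup (H i)] [∀ i, InnerProductSpace ℂ (H i)]
  {A : ∀ j k, H k →L[ℂ] H j} {S : PiLp 2 H →L[ℂ] PiLp 2 H}

lemma PiLp.inner_single_single_of_ne {i j : ι} (hij : i ≠ j) (y : H i) (x : H j) :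
    ⟪PiLp.single 2 i y, PiLp.single 2 j x⟫_ℂ = 0 := by
  rw [PiLp.inner_apply]
  refine Finset.sum_eq_zero fun r _ => ?_
  rcases eq_or_ne r i with rfl | hri
  · rw [PiLp.single_eq_of_ne _ hij, inner_zero_right]
  · rw [PiLp.single_eq_of_ne _ hri, inner_zero_left]

lemma PiLp.norm_single_add_single_sq {i j : ι} (hij : i ≠ j) (y : H i) (x : H j) :
    ‖PiLp.single 2 i y + PiLp.single 2 j x‖ ^ 2 = ‖y‖ ^ 2 + ‖x‖ ^ 2 := by
  simp only [sq, norm_add_sq_eq_norm_sq_add_norm_sq_of_inner_eq_zero _ _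
    (PiLp.inner_single_single_of_ne hij y x), PiLp.norm_single]

variable (hS : ∀ z : PiLp 2 H, ∀ j, (WithLp.equiv 2 (∀ i, H i)) (S z) j =
      ∑ k, A j k ((WithLp.equiv 2 (∀ i, H i)) z k))
include hS

lemma apply_single_of_blocks (j k : ι) (x : H k) : S (PiLp.single 2 k x) j = A j k x := by
  simp only [WithLp.equiv_apply] at hS
  rw [hS, Finset.sum_eq_single k (fun k' _ hk' => by rw [PiLp.single_eq_of_ne _ hk', map_zero])
    (by simp), PiLp.single_eq_same]

lemma inner_apply_single_single_of_blocks (j k : ι) (x : H k) (y : H j) :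
    ⟪S (PiLp.single 2 k x), PiLp.single 2 j y⟫_ℂ = ⟪A j k x, y⟫_ℂ := by
  rw [PiLp.inner_apply, Finset.sum_eq_single j
    (fun r _ hr => by rw [PiLp.single_eq_of_ne _ hr, inner_zero_right]) (by simp),
    PiLp.single_eq_same, apply_single_of_blocks hS]

lemma inner_self_single_add_single_of_blocks (i j : ι) (y : H i) (x : H j) :
    ⟪S (PiLp.single 2 i y + PiLp.single 2 j x), PiLp.single 2 i y + PiLp.single 2 j x⟫_ℂ =
      ⟪A i i y, y⟫_ℂ + ⟪A i j x, y⟫_ℂ + ⟪A j i y, x⟫_ℂ + ⟪A j j x, x⟫_ℂ := by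
  simp only [map_add, inner_add_left, inner_add_right, inner_apply_single_single_of_blocks hS]
  ring

end BlockMatrix

theorem stmt19_general {n : ℕ} {H : Fin n → Type*} [∀ i, NormedAddCommGroup (H i)]
    [∀ i, InnerProductSpace ℂ (H i)]
    (A : ∀ j k, H k →L[ℂ] H j)
    (htri : ∀ j k, k < j → A j k = 0)
    (S : PiLp 2 H →L[ℂ] PiLp 2 H)
    (hS : ∀ z : PiLp 2 H, ∀ j, (WithLp.equiv 2 (∀ i, H i)) (S z) j =
      ∑ k, A j k ((WithLp.equiv 2 (∀ i, H i)) z k)) :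
    (∀ k, numRadius (A k k) ≤ numRadius S) ∧
      ∀ i j : Fin n, i < j → ‖A i j‖ / 2 ≤ numRadius S := by
  refine ⟨fun k => ?_, fun i j hij => ?_⟩
  · exact numRadius_le_of_isometry (A k k) S (PiLp.single 2 k) (PiLp.norm_single 2 H k)
      fun x => (inner_apply_single_single_of_blocks hS k k x x).symm
  · have h := norm_le_two_mul_numRadius S (A i j) (fun y x => PiLp.single 2 i y + PiLp.single 2 j x)
      (PiLp.norm_single_add_single_sq hij.ne) fun y x => by
        simp only [inner_self_single_add_single_of_blocks hS, htri j i hij, map_neg, inner_neg_left,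
          inner_neg_right, zero_apply, inner_zero_left, neg_zero]
        ring
    linarith

theorem stmt19 {n : ℕ} {H : Fin n → Type*} [∀ i, NormedAddCommGroup (H i)]
    [∀ i, InnerProductSpace ℂ (H i)] [∀ i, CompleteSpace (H i)]
    (A : ∀ j k, H k →L[ℂ] H j)
    (htri : ∀ j k, k < j → A j k = 0)
    (S : PiLp 2 H →L[ℂ] PiLp 2 H)
    (hS : ∀ z : PiLp 2 H, ∀ j, (WithLp.equiv 2 (∀ i, H i)) (S z) j =
      ∑ k, A j k ((WithLp.equiv 2 (∀ i, H i)) z k)) :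
    (∀ k, numRadius (A k k) ≤ numRadius S) ∧
      ∀ i j : Fin n, i < j → ‖A i j‖ / 2 ≤ numRadius S :=
  stmt19_general A htri S hS
end
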